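/- The Garding cone Γ_k = {λ ∈ ℝ^{n-1} : σ_i(λ) > 0 for all 1 ≤ i ≤ k} is a convex cone: it is closed under addition and under multiplication by positive scalars. -/

import Mathlib

noncomputable def esymmFin (m k : ℕ) (l : Fin m → ℝ) : ℝ :=
  ∑ s ∈ Finset.powersetCard k (Finset.univ : Finset (Fin m)), ∏ i ∈ s, l i

/-- The Garding cone Γ_k in ℝ^{n-1}. -/
def GardingCone (n k : ℕ) : Set (Fin (n - 1) → ℝ) :=
  {lam | ∀ i : ℕ, 1 ≤ i → i ≤ k → 0 < esymmFin (n - 1) i lam}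

/-!
`σ_k` is hyperbolic in the direction `𝟙`: `c ↦ σ_k(y + c 𝟙)` is a Hasse derivative of
`∏ (X + yᵢ)`, so by Rolle it has only real roots, and for `y ∈ Γ_k` all its coefficients are
positive. Following Gårding, we move a direction `l ∈ Γ_k` to `𝟙` along a segment inside `Γ_k`.
The roots of `t ↦ σ_k(a + t l)` move continuously (the degree stays `k`), so they cannot cross a
line that carries no root at any time. With the real axis as that line, `σ_k` is hyperbolic in
every direction `l ∈ Γ_k`. With the imaginary axis, for `x, l ∈ Γ_k` every root of
`t ↦ σ_k(x + t l)` has negative real part; hence `σ_k(x + t l) > 0` for all `t ≥ 0`, and `t = 1`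
gives `x + l ∈ Γ_k`.
-/

open Polynomial Finset Filter Topology

lemma Polynomial.Splits.derivative_real {p : ℝ[X]} (hp : p.Splits) : (derivative p).Splits := by
  rw [splits_iff_card_roots] at hp ⊢
  have := card_roots_le_derivative p
  have := card_roots' (derivative p)
  have := natDegree_derivative_le p
  omega

lemma Polynomial.Splits.hasseDeriv_real {p : ℝ[X]} (hp : p.Splits) (n : ℕ) :
    (hasseDeriv n p).Splits := by
  have hiter : (derivative^[n] p).Splits := by
    induction n with
    | zero => exact hp
    | succ n ih => rw [Function.iterate_succ_apply']; exact ih.derivative_real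
  have : hasseDeriv n p = C ((n.factorial : ℝ)⁻¹) * derivative^[n] p := by
    rw [← factorial_smul_hasseDeriv, LinearMap.smul_apply, nsmul_eq_mul, ← mul_assoc,
      ← C_eq_natCast, ← C_mul, inv_mul_cancel₀ (by positivity), C_1, one_mul]
  rw [this]
  exact hiter.C_mul _

lemma Polynomial.eval_pos_of_coeff_nonneg {R : Type*} [Semiring R] [PartialOrder R]
    [IsStrictOrderedRing R] {p : R[X]} (hcoeff : ∀ n, 0 ≤ p.coeff n) (h0 : 0 < p.coeff 0) {u : R}
    (hu : 0 ≤ u) : 0 < p.eval u := by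
  rw [eval_eq_sum_range]
  exact sum_pos' (fun n _ => mul_nonneg (hcoeff n) (pow_nonneg hu n))
    ⟨0, by simp, by simpa using h0⟩

lemma continuous_coeff_prod {T ι R : Type*} [TopologicalSpace T] [CommSemiring R]
    [TopologicalSpace R] [IsTopologicalSemiring R] (s : Finset ι) {f : ι → T → R[X]}
    (hf : ∀ i ∈ s, ∀ j, Continuous fun x => (f i x).coeff j) (j : ℕ) :
    Continuous fun x => (∏ i ∈ s, f i x).coeff j := by
  classical
  induction s using Finset.induction_on generalizing j with
  | empty => simp only [prod_empty]; exact continuous_const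
  | insert i s hi ih =>
    simp only [prod_insert hi, coeff_mul]
    exact continuous_finsetSum _ fun q _ => (hf i (mem_insert_self i s) _).mul
      (ih (fun i' hi' => hf i' (mem_insert_of_mem hi')) _)

lemma Polynomial.Splits.exists_isRoot_norm_sub_pow_mul_le {K : Type*} [NormedField K]
    {q : K[X]} (hq : q.Splits) (hdeg : 0 < q.natDegree) (w : K) :
    ∃ r, q.IsRoot r ∧ ‖w - r‖ ^ q.natDegree * ‖q.leadingCoeff‖ ≤ ‖q.eval w‖ := by
  have hroots : q.roots ≠ 0 := by
    rw [← Multiset.card_pos, ← hq.natDegree_eq_card_roots]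
    exact hdeg
  obtain ⟨r, hr, hmin⟩ := Multiset.exists_min_image (fun r => ‖w - r‖) hroots
  refine ⟨r, (mem_roots (ne_zero_of_natDegree_gt hdeg)).1 hr, ?_⟩
  have hnorm : ‖(q.roots.map (w - ·)).prod‖ = (q.roots.map (‖w - ·‖)).prod := by
    rw [← normHom_apply, map_multiset_prod, Multiset.map_map]
    rfl
  rw [hq.eval_eq_prod_roots, norm_mul, mul_comm, hnorm, hq.natDegree_eq_card_roots,
    ← Multiset.card_map (‖w - ·‖)]
  gcongr
  calc ‖w - r‖ ^ Multiset.card (q.roots.map (‖w - ·‖))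
      = (q.roots.map fun _ => ‖w - r‖).prod := by simp
    _ ≤ (q.roots.map (‖w - ·‖)).prod :=
      Multiset.prod_map_le_prod_map₀ _ _ (fun _ _ => norm_nonneg _) hmin

lemma Polynomial.IsRoot.norm_le_one_add_sum_div {K : Type*} [NormedField K] {q : K[X]}
    (hq : q ≠ 0) {z : K} (hz : q.IsRoot z) :
    ‖z‖ ≤ 1 + (∑ j ∈ range q.natDegree, ‖q.coeff j‖) / ‖q.leadingCoeff‖ := by
  have hsup : (range q.natDegree).sup (‖q.coeff ·‖₊) ≤ ∑ j ∈ range q.natDegree, ‖q.coeff j‖₊ :=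
    Finset.sup_le fun j hj => single_le_sum (f := (‖q.coeff ·‖₊)) (fun _ _ => by positivity) hj
  have hbound := NNReal.coe_le_coe.2 <| (hz.norm_lt_cauchyBound hq).le.trans
    (add_le_add_left (div_le_div_of_nonneg_right hsup (by positivity)) 1)
  push_cast at hbound
  linarith

section RootDeformation

variable {T : Type*} [TopologicalSpace T] {p : T → ℂ[X]} {d : ℕ}

lemma continuous_eval_of_continuous_coeff (hdeg : ∀ x, (p x).natDegree ≤ d)
    (hcoeff : ∀ j, Continuous fun x => (p x).coeff j) :
    Continuous fun q : T × ℂ => (p q.1).eval q.2 := by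
  simp_rw [fun q : T × ℂ => eval_eq_sum_range' (Nat.lt_succ_of_le (hdeg q.1)) q.2]
  exact continuous_finsetSum _ fun j _ =>
    ((hcoeff j).comp continuous_fst).mul (continuous_snd.pow j)

lemma eventually_exists_isRoot_norm_sub_lt (hdeg : ∀ x, (p x).natDegree ≤ d)
    (hlead : ∀ x, (p x).coeff d ≠ 0) (hcoeff : ∀ j, Continuous fun x => (p x).coeff j)
    {x₀ : T} {z₀ : ℂ} (hz₀ : (p x₀).IsRoot z₀) {ε : ℝ} (hε : 0 < ε) :
    ∀ᶠ x in 𝓝 x₀, ∃ z, (p x).IsRoot z ∧ ‖z₀ - z‖ < ε := by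
  have hnat : ∀ x, (p x).natDegree = d := fun x =>
    natDegree_eq_of_le_of_coeff_ne_zero (hdeg x) (hlead x)
  have hp : ∀ x, p x ≠ 0 := fun x h => hlead x (by rw [h, coeff_zero])
  have hd : 0 < d := hnat x₀ ▸ natDegree_pos_iff_degree_pos.2 (degree_pos_of_root (hp x₀) hz₀)
  have hratio : Tendsto (fun x => ‖(p x).eval z₀‖ / ‖(p x).coeff d‖) (𝓝 x₀) (𝓝 0) := by
    have hev : Continuous fun x => (p x).eval z₀ :=
      (continuous_eval_of_continuous_coeff hdeg hcoeff).comp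
        (continuous_id.prodMk continuous_const)
    have := (hev.norm.div (hcoeff d).norm fun x => norm_ne_zero_iff.2 (hlead x)).tendsto x₀
    simpa only [Pi.div_def, hz₀.eq_zero, norm_zero, zero_div] using this
  filter_upwards [hratio.eventually (gt_mem_nhds (pow_pos hε d))] with x hx
  obtain ⟨r, hr, hle⟩ := (IsAlgClosed.splits (p x)).exists_isRoot_norm_sub_pow_mul_le
    (hnat x ▸ hd) z₀
  refine ⟨r, hr, (pow_lt_pow_iff_left₀ (norm_nonneg _) hε.le hd.ne').1 ?_⟩
  rw [hnat x, leadingCoeff, hnat x, ← le_div_iff₀ (norm_pos_iff.2 (hlead x))] at hle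
  exact hle.trans_lt hx

lemma exists_bound_of_isRoot [CompactSpace T] (hdeg : ∀ x, (p x).natDegree ≤ d)
    (hlead : ∀ x, (p x).coeff d ≠ 0) (hcoeff : ∀ j, Continuous fun x => (p x).coeff j) :
    ∃ R, ∀ x z, (p x).IsRoot z → ‖z‖ ≤ R := by
  have hnat : ∀ x, (p x).natDegree = d := fun x =>
    natDegree_eq_of_le_of_coeff_ne_zero (hdeg x) (hlead x)
  have hbound : Continuous fun x => 1 + (∑ j ∈ range d, ‖(p x).coeff j‖) / ‖(p x).coeff d‖ :=
    continuous_const.add <| (continuous_finsetSum _ fun j _ => (hcoeff j).norm).div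
      (hcoeff d).norm fun x => norm_ne_zero_iff.2 (hlead x)
  obtain ⟨R, hR⟩ := (isCompact_range hbound).bddAbove
  refine ⟨R, fun x z hz => ?_⟩
  have := hz.norm_le_one_add_sum_div fun h => hlead x (by rw [h, coeff_zero])
  rw [hnat x, leadingCoeff, hnat x] at this
  exact this.trans (hR ⟨x, rfl⟩)

theorem forall_isRoot_lt_of_preconnected [CompactSpace T] [PreconnectedSpace T]
    (hdeg : ∀ x, (p x).natDegree ≤ d) (hlead : ∀ x, (p x).coeff d ≠ 0)
    (hcoeff : ∀ j, Continuous fun x => (p x).coeff j) {φ : ℂ → ℝ} (hφ : Continuous φ)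
    (hbarrier : ∀ x z, (p x).IsRoot z → φ z ≠ 0) {x₀ : T}
    (h₀ : ∀ z, (p x₀).IsRoot z → φ z < 0) (x : T) {z : ℂ} (hz : (p x).IsRoot z) : φ z < 0 := by
  -- `A` is open since roots stay bounded and limits of roots are roots, and closed since
  -- every root of a limit is a limit of roots.
  set A := {x | ∀ z, (p x).IsRoot z → φ z < 0}
  have hA_open : IsOpen A := by
    obtain ⟨R, hR⟩ := exists_bound_of_isRoot hdeg hlead hcoeff
    have hroots : Aᶜ = Prod.fst '' {q : T × Metric.closedBall (0 : ℂ) R |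
        (p q.1).eval (q.2 : ℂ) = 0 ∧ 0 ≤ φ q.2} := by
      ext x
      simp only [A, Set.mem_compl_iff, Set.mem_ofPred_eq, not_forall, not_lt, exists_prop,
        Set.mem_image, Prod.exists, exists_and_right, exists_eq_right, Subtype.exists,
        Metric.mem_closedBall, dist_zero_right]
      exact ⟨fun ⟨z, hz, hφz⟩ => ⟨z, hR x z hz, hz, hφz⟩, fun ⟨z, _, hz, hφz⟩ => ⟨z, hz, hφz⟩⟩
    refine isClosed_compl_iff.1 (hroots ▸ isClosedMap_fst_of_compactSpace _ ?_)
    exact (isClosed_eq ((continuous_eval_of_continuous_coeff hdeg hcoeff).comp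
      (continuous_fst.prodMk (continuous_subtype_val.comp continuous_snd))) continuous_const).inter
      (isClosed_le continuous_const (hφ.comp (continuous_subtype_val.comp continuous_snd)))
  have hA_closed : IsClosed A := by
    refine isOpen_compl_iff.1 (isOpen_iff_mem_nhds.2 fun x₁ hx₁ => ?_)
    obtain ⟨z₁, hz₁, hφz₁⟩ : ∃ z, (p x₁).IsRoot z ∧ 0 < φ z := by
      simp only [A, Set.mem_compl_iff, Set.mem_ofPred_eq, not_forall, not_lt] at hx₁
      obtain ⟨z, hz, hφz⟩ := hx₁
      exact ⟨z, hz, hφz.lt_of_ne' (hbarrier x₁ z hz)⟩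
    obtain ⟨ε, hε, hball⟩ := Metric.isOpen_iff.1 (isOpen_lt continuous_const hφ) z₁ hφz₁
    filter_upwards [eventually_exists_isRoot_norm_sub_lt hdeg hlead hcoeff hz₁ hε]
      with x ⟨z, hz, hdist⟩ hxA
    exact (hxA z hz).not_gt (hball (by rwa [Metric.mem_ball, dist_comm, dist_eq_norm]))
  have hA : A = Set.univ := IsClopen.eq_univ ⟨hA_closed, hA_open⟩ ⟨x₀, h₀⟩
  exact (hA ▸ Set.mem_univ x : x ∈ A) z hz

end RootDeformation

section Esymm

variable {ι : Type*} [Fintype ι]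

def esymmVec {R : Type*} [CommSemiring R] (k : ℕ) (f : ι → R) : R :=
  ∑ s ∈ powersetCard k univ, ∏ i ∈ s, f i

variable {R S : Type*} [CommSemiring R] [CommSemiring S]

lemma map_esymmVec (φ : R →+* S) (k : ℕ) (f : ι → R) :
    φ (esymmVec k f) = esymmVec k fun i => φ (f i) := by
  simp [esymmVec]

lemma ofReal_esymmVec (k : ℕ) (f : ι → ℝ) :
    ((esymmVec k f : ℝ) : ℂ) = esymmVec k fun i => (f i : ℂ) :=
  map_esymmVec Complex.ofRealHom k f

lemma esymmVec_smul (c : R) (k : ℕ) (f : ι → R) :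
    esymmVec k (c • f) = c ^ k * esymmVec k f := by
  simp only [esymmVec, mul_sum, Pi.smul_apply, smul_eq_mul]
  refine sum_congr rfl fun s hs => ?_
  rw [prod_mul_distrib, prod_const, (mem_powersetCard.1 hs).2]

lemma esymmVec_zero (f : ι → R) : esymmVec 0 f = 1 := by
  simp [esymmVec]

lemma esymmVec_of_card_lt {k : ℕ} (hk : Fintype.card ι < k) (f : ι → R) :
    esymmVec k f = 0 := by
  rw [esymmVec, powersetCard_eq_empty.2 (by simpa using hk), sum_empty]

lemma esymmVec_const_one (k : ℕ) :
    esymmVec k (fun _ : ι => (1 : R)) = (Fintype.card ι).choose k := by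
  simp [esymmVec, card_powersetCard]

lemma continuous_esymmVec [TopologicalSpace R] [IsTopologicalSemiring R] (k : ℕ) :
    Continuous (esymmVec k : (ι → R) → R) :=
  continuous_finsetSum _ fun _ _ => continuous_finsetProd _ fun i _ => continuous_apply i

lemma coeff_prod_X_add_C {j : ℕ} (hj : j ≤ Fintype.card ι)
    (y : ι → R) : (∏ i, (X + C (y i))).coeff (Fintype.card ι - j) = esymmVec j y := by
  rw [prod_X_add_C_coeff univ y (by simp), card_univ, Nat.sub_sub_self hj, esymmVec]

lemma natDegree_prod_X_add_C [Nontrivial R] (y : ι → R) :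
    (∏ i, (X + C (y i))).natDegree = Fintype.card ι := by
  simp [natDegree_prod_of_monic _ _ fun i _ => monic_X_add_C (y i)]

end Esymm

lemma esymmVec_add_const {ι R : Type*} [Fintype ι] [CommRing R] {k : ℕ}
    (hk : k ≤ Fintype.card ι) (y : ι → R) (c : R) :
    esymmVec k (fun i => y i + c) =
      (hasseDeriv (Fintype.card ι - k) (∏ i, (X + C (y i)))).eval c := by
  have hshift : ∏ i, (X + C (y i + c)) = taylor c (∏ i, (X + C (y i))) := by
    simp only [taylor_apply, Polynomial.prod_comp, add_comp, X_comp, C_comp, C_add]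
    exact prod_congr rfl fun i _ => by ring
  rw [← taylor_coeff, ← hshift, coeff_prod_X_add_C hk]

section Line

variable {ι : Type*} [Fintype ι] {R : Type*} [CommSemiring R]

noncomputable def esymmLine (k : ℕ) (a b : ι → R) : R[X] :=
  esymmVec k fun i => C (a i) + C (b i) * X

lemma eval_esymmLine (k : ℕ) (a b : ι → R) (t : R) :
    (esymmLine k a b).eval t = esymmVec k fun i => a i + b i * t := by
  rw [esymmLine, ← coe_evalRingHom, map_esymmVec]
  simp

lemma map_esymmLine {S : Type*} [CommSemiring S] (φ : R →+* S) (k : ℕ) (a b : ι → R) :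
    (esymmLine k a b).map φ = esymmLine k (fun i => φ (a i)) (fun i => φ (b i)) := by
  rw [esymmLine, ← coe_mapRingHom, map_esymmVec]
  simp [esymmLine]

lemma natDegree_esymmLine_le (k : ℕ) (a b : ι → R) : (esymmLine k a b).natDegree ≤ k := by
  refine natDegree_sum_le_of_forall_le _ _ fun s hs => (natDegree_prod_le _ _).trans ?_
  rw [← (mem_powersetCard.1 hs).2]
  exact (sum_le_card_nsmul s _ 1 fun i _ => by compute_degree).trans_eq (mul_one _)

lemma coeff_esymmLine_self (k : ℕ) (a b : ι → R) : (esymmLine k a b).coeff k = esymmVec k b := by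
  rw [esymmLine, esymmVec, finsetSum_coeff]
  refine sum_congr rfl fun s hs => ?_
  have := coeff_prod_of_natDegree_le s (fun i => C (a i) + C (b i) * X) 1
    fun i _ => by compute_degree
  rw [mul_one, (mem_powersetCard.1 hs).2] at this
  rw [this]
  simp

lemma continuous_coeff_esymmLine {T : Type*} [TopologicalSpace T] [TopologicalSpace R]
    [IsTopologicalSemiring R] (k : ℕ) {a b : T → ι → R} (ha : Continuous a) (hb : Continuous b)
    (j : ℕ) : Continuous fun x => (esymmLine k (a x) (b x)).coeff j := by
  simp only [esymmLine, esymmVec, finsetSum_coeff]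
  refine continuous_finsetSum _ fun s _ => continuous_coeff_prod s (fun i _ n => ?_) j
  simp only [coeff_add, coeff_C, coeff_C_mul_X]
  split_ifs <;> fun_prop

end Line

section DirectionOne

variable {ι : Type*} [Fintype ι]

lemma esymmLine_const_one_splits {k : ℕ} (hk : k ≤ Fintype.card ι) (y : ι → ℝ) :
    (esymmLine k y fun _ => 1).Splits := by
  have : (esymmLine k y fun _ => 1) = hasseDeriv (Fintype.card ι - k) (∏ i, (X + C (y i))) :=
    Polynomial.funext fun t => by simp [eval_esymmLine, esymmVec_add_const hk]
  rw [this]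
  exact (Splits.prod fun i _ =>
    Splits.of_natDegree_le_one (natDegree_X_add_C (y i)).le).hasseDeriv_real _

lemma im_eq_zero_of_esymmVec_add_eq_zero {k : ℕ} (hk : k ≤ Fintype.card ι) (y : ι → ℝ)
    {w : ℂ} (h : esymmVec k (fun i => (y i : ℂ) + w) = 0) : w.im = 0 := by
  have hP : (esymmLine k y fun _ => 1) ≠ 0 := fun h0 => by
    have := coeff_esymmLine_self k y fun _ => (1 : ℝ)
    rw [h0, coeff_zero, esymmVec_const_one] at this
    exact (Nat.cast_ne_zero.2 (Nat.choose_pos hk).ne') this.symm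
  have hroot : ((esymmLine k y fun _ => 1).map Complex.ofRealHom).IsRoot w := by
    simpa [map_esymmLine, eval_esymmLine] using h
  obtain ⟨r, rfl⟩ := (esymmLine_const_one_splits hk y).mem_range_of_isRoot hP hroot
  simp

end DirectionOne

/-- The Gårding cone `Γ_k` in `ℝ^ι`. -/
def esymmPosCone (ι : Type*) [Fintype ι] (k : ℕ) : Set (ι → ℝ) :=
  {x | ∀ j, 1 ≤ j → j ≤ k → 0 < esymmVec j x}

namespace esymmPosCone

variable {ι : Type*} [Fintype ι] {k : ℕ} {x : ι → ℝ}

lemma le_card (hk : 1 ≤ k) (hx : x ∈ esymmPosCone ι k) : k ≤ Fintype.card ι := by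
  by_contra! h
  exact (hx k hk le_rfl).ne' (esymmVec_of_card_lt h x)

lemma anti {k' : ℕ} (h : k' ≤ k) (hx : x ∈ esymmPosCone ι k) : x ∈ esymmPosCone ι k' :=
  fun j hj hjk => hx j hj (hjk.trans h)

lemma smul_mem {c : ℝ} (hc : 0 < c) (hx : x ∈ esymmPosCone ι k) : c • x ∈ esymmPosCone ι k :=
  fun j hj hjk => by
    rw [esymmVec_smul]
    exact mul_pos (pow_pos hc j) (hx j hj hjk)

lemma const_one_mem (hk : k ≤ Fintype.card ι) : (fun _ => 1) ∈ esymmPosCone ι k :=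
  fun j _ hjk => by
    rw [esymmVec_const_one]
    exact_mod_cast Nat.choose_pos (hjk.trans hk)

/-- The coefficients of `c ↦ σ_k(x + c 𝟙)` are nonnegative multiples of the `σ_j(x)`, `j ≤ k`. -/
lemma esymmVec_add_const_pos (hk : 1 ≤ k) (hx : x ∈ esymmPosCone ι k) {u : ℝ} (hu : 0 ≤ u) :
    0 < esymmVec k fun i => x i + u := by
  have hcard := le_card hk hx
  rw [esymmVec_add_const hcard]
  refine eval_pos_of_coeff_nonneg (fun n => ?_) ?_ hu
  · rw [hasseDeriv_coeff]
    refine mul_nonneg (Nat.cast_nonneg _) ?_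
    rcases le_or_gt n k with hn | hn
    · rw [show n + (Fintype.card ι - k) = Fintype.card ι - (k - n) by omega,
        coeff_prod_X_add_C (by omega)]
      rcases (k - n).eq_zero_or_pos with h0 | h0
      · rw [h0, esymmVec_zero]
        exact zero_le_one
      · exact (hx _ h0 (Nat.sub_le k n)).le
    · rw [coeff_eq_zero_of_natDegree_lt (by rw [natDegree_prod_X_add_C]; omega)]
  · rw [hasseDeriv_coeff, zero_add, Nat.choose_self, Nat.cast_one, one_mul,
      coeff_prod_X_add_C hcard]
    exact hx k hk le_rfl

lemma add_const_mem (hx : x ∈ esymmPosCone ι k) {u : ℝ} (hu : 0 ≤ u) :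
    (fun i => x i + u) ∈ esymmPosCone ι k :=
  fun _ hj hjk => esymmVec_add_const_pos hj (anti hjk hx) hu

lemma segment_mem (hx : x ∈ esymmPosCone ι k) {s : ℝ} (hs : s ∈ Set.Icc (0 : ℝ) 1) :
    (fun i => (1 - s) * x i + s) ∈ esymmPosCone ι k := by
  rcases hs.2.eq_or_lt with rfl | hs1
  · rw [show (fun i => (1 - 1 : ℝ) * x i + 1) = fun _ => 1 by ext; ring]
    exact fun j hj hjk => const_one_mem (le_card hj (anti hjk hx)) j hj le_rfl
  · have : (fun i => (1 - s) * x i + s) = (1 - s) • fun i => x i + s / (1 - s) := by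
      ext i
      simp only [Pi.smul_apply, smul_eq_mul]
      field_simp
    rw [this]
    exact smul_mem (by linarith) (add_const_mem hx (div_nonneg hs.1 (by linarith)))

lemma isOpen : IsOpen (esymmPosCone ι k) := by
  have : esymmPosCone ι k = ⋂ j ∈ Icc 1 k, {x | 0 < esymmVec j x} := by
    ext
    simp [esymmPosCone, and_imp]
  rw [this]
  exact isOpen_biInter_finset fun j _ => isOpen_lt continuous_const (continuous_esymmVec j)

lemma exists_sub_const_mem (hx : x ∈ esymmPosCone ι k) :
    ∃ α > 0, (fun i => x i - α) ∈ esymmPosCone ι k := by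
  have hcont : Continuous fun α : ℝ => fun i => x i - α := by fun_prop
  have hnhds : ∀ᶠ α in 𝓝[>] 0, (fun i => x i - α) ∈ esymmPosCone ι k :=
    nhdsWithin_le_nhds <| hcont.continuousAt.preimage_mem_nhds <| by
      simpa using isOpen.mem_nhds hx
  obtain ⟨α, hα, hpos⟩ := (hnhds.and self_mem_nhdsWithin).exists
  exact ⟨α, hpos, hα⟩

end esymmPosCone

section Hyperbolicity

variable {ι : Type*} [Fintype ι] {k : ℕ}

lemma lt_of_esymmVec_eq_zero_of_deform (hk : 1 ≤ k) {l : ι → ℝ} (hl : l ∈ esymmPosCone ι k)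
    (a : ι → ℂ) {φ : ℂ → ℝ} (hφ : Continuous φ)
    (hbarrier : ∀ s ∈ Set.Icc (0 : ℝ) 1, ∀ t : ℂ,
      (esymmVec k fun i => a i + (((1 - s) * l i + s : ℝ) : ℂ) * t) = 0 → φ t ≠ 0)
    (hone : ∀ t : ℂ, (esymmVec k fun i => a i + t) = 0 → φ t < 0) {t : ℂ}
    (ht : (esymmVec k fun i => a i + l i * t) = 0) : φ t < 0 := by
  set ν : unitInterval → ι → ℝ := fun s i => (1 - s) * l i + s
  have hlead : ∀ s, (esymmLine k a fun i => (ν s i : ℂ)).coeff k ≠ 0 := fun s => by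
    rw [coeff_esymmLine_self, ← ofReal_esymmVec]
    exact_mod_cast (esymmPosCone.segment_mem hl s.2 k hk le_rfl).ne'
  refine forall_isRoot_lt_of_preconnected (p := fun s => esymmLine k a fun i => (ν s i : ℂ))
    (fun s => natDegree_esymmLine_le _ _ _) hlead
    (continuous_coeff_esymmLine k continuous_const (by fun_prop)) hφ
    (fun s z hz => hbarrier s s.2 z (by simpa [ν, eval_esymmLine] using hz.eq_zero)) (x₀ := 1)
    (fun z hz => hone z (by simpa [ν, eval_esymmLine] using hz.eq_zero)) 0 ?_
  simpa [ν, eval_esymmLine] using ht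

theorem esymmVec_ne_zero_of_im_ne_zero (hk : 1 ≤ k) {ν : ι → ℝ} (hν : ν ∈ esymmPosCone ι k)
    (x : ι → ℝ) {w : ℂ} (hw : w.im ≠ 0) : (esymmVec k fun i => (x i : ℂ) + ν i * w) ≠ 0 := by
  wlog hw_pos : 0 < w.im generalizing w
  · intro h
    refine this (w := starRingEnd ℂ w) (by simpa using hw)
      (by simpa using (not_lt.1 hw_pos).lt_of_ne hw) ?_
    simpa [map_esymmVec] using congrArg (starRingEnd ℂ) h
  have hcard := esymmPosCone.le_card hk hν
  obtain ⟨α, hα, hl⟩ := esymmPosCone.exists_sub_const_mem hν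
  set c : ℂ := (w.im * α : ℝ) * Complex.I
  have hc_re : c.re = 0 := by simp [c]
  have hc_im : c.im = w.im * α := by simp [c]
  have hc : c.im ≠ 0 := by rw [hc_im]; positivity
  -- `x + w ν = a + (i Im w) (ν - α 𝟙)` with `a = x + (Re w) ν + i (Im w) α 𝟙`. While `ν - α 𝟙`
  -- moves to `𝟙`, no root of `t ↦ σ_k(a + t ·)` is real, as the imaginary part of `a` is a
  -- nonzero multiple of `𝟙`; so the roots stay in the lower half-plane, which misses `i Im w`.
  intro h
  have key := lt_of_esymmVec_eq_zero_of_deform hk hl (fun i => ((x i + ν i * w.re : ℝ) : ℂ) + c)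
    Complex.continuous_im (fun s _ t ht him => hc ?_) (fun t ht => ?_) (t := w.im * Complex.I) ?_
  · exact lt_asymm hw_pos (by simpa using key)
  · refine im_eq_zero_of_esymmVec_add_eq_zero hcard
      (fun i => x i + ν i * w.re + ((1 - s) * (ν i - α) + s) * t.re) (ht ▸ ?_)
    congr 1
    ext i
    apply Complex.ext <;> simp [him, hc_re]
  · have := im_eq_zero_of_esymmVec_add_eq_zero hcard (fun i => x i + ν i * w.re) (w := c + t)
      (ht ▸ by simp only [add_assoc])
    rw [Complex.add_im, hc_im] at this
    linarith [mul_pos hw_pos hα]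
  · rw [← h]
    congr 1
    ext i
    apply Complex.ext <;> simp [hc_re, hc_im]
    ring

theorem re_neg_of_esymmVec_eq_zero (hk : 1 ≤ k) {x l : ι → ℝ} (hx : x ∈ esymmPosCone ι k)
    (hl : l ∈ esymmPosCone ι k) {t : ℂ} (ht : (esymmVec k fun i => (x i : ℂ) + l i * t) = 0) :
    t.re < 0 := by
  have hcard := esymmPosCone.le_card hk hx
  refine lt_of_esymmVec_eq_zero_of_deform hk hl (fun i => (x i : ℂ)) Complex.continuous_re
    (fun s hs t ht hre => ?_) (fun t ht => ?_) ht
  · by_cases him : t.im = 0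
    · obtain rfl : t = 0 := Complex.ext hre him
      refine (hx k hk le_rfl).ne' (Complex.ofReal_eq_zero.1 ?_)
      simpa [ofReal_esymmVec] using ht
    · exact esymmVec_ne_zero_of_im_ne_zero hk (esymmPosCone.segment_mem hl hs) x him ht
  · have him := im_eq_zero_of_esymmVec_add_eq_zero hcard x ht
    by_contra! hre
    refine (esymmPosCone.esymmVec_add_const_pos hk hx hre).ne' ?_
    rw [← Complex.ofReal_inj, ofReal_esymmVec, Complex.ofReal_zero, ← ht]
    congr 1
    ext i
    apply Complex.ext <;> simp [him]

theorem esymmVec_add_pos (hk : 1 ≤ k) {x l : ι → ℝ} (hx : x ∈ esymmPosCone ι k)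
    (hl : l ∈ esymmPosCone ι k) : 0 < esymmVec k (x + l) := by
  set f : ℝ → ℝ := fun t => esymmVec k fun i => x i + l i * t
  have hf : Continuous f := (continuous_esymmVec k).comp (by fun_prop)
  have hne : ∀ t, 0 ≤ t → f t ≠ 0 := fun t ht h => by
    have := re_neg_of_esymmVec_eq_zero hk hx hl (t := t) (by
      simpa [f, ofReal_esymmVec] using congrArg Complex.ofReal h)
    simp only [Complex.ofReal_re] at this
    linarith
  have h0 : 0 < f 0 := by simpa [f] using hx k hk le_rfl
  suffices 0 < f 1 by simpa [f, ← Pi.add_def] using this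
  by_contra! h1
  obtain ⟨t, ht, hft⟩ := intermediate_value_Icc' zero_le_one hf.continuousOn ⟨h1, h0.le⟩
  exact hne t ht.1 hft

end Hyperbolicity

lemma esymmPosCone.add_mem {ι : Type*} [Fintype ι] {k : ℕ} {x l : ι → ℝ}
    (hx : x ∈ esymmPosCone ι k) (hl : l ∈ esymmPosCone ι k) : x + l ∈ esymmPosCone ι k :=
  fun _ hj hjk => esymmVec_add_pos hj (esymmPosCone.anti hjk hx) (esymmPosCone.anti hjk hl)

lemma gardingCone_eq (n k : ℕ) : GardingCone n k = esymmPosCone (Fin (n - 1)) k := rfl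

/-- The Garding cone is a convex cone: closed under addition and positive scalar
multiplication. -/
theorem gardingCone_convexCone (n k : ℕ) :
    (∀ lam mu : Fin (n - 1) → ℝ, lam ∈ GardingCone n k → mu ∈ GardingCone n k →
        lam + mu ∈ GardingCone n k) ∧
    (∀ (c : ℝ) (lam : Fin (n - 1) → ℝ), 0 < c → lam ∈ GardingCone n k →
        c • lam ∈ GardingCone n k) := by
  rw [gardingCone_eq]
  exact ⟨fun _ _ => esymmPosCone.add_mem, fun _ _ => esymmPosCone.smul_mem⟩
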